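/- arXiv:0802.2108 — 7 statements merged into one kernel-verified Lean document; each statement's English description precedes it below -/
import Mathlib

section
/- Let σ be an n-simplex (n ≥ 1) with vertices v_0, …, v_n in a Euclidean space. Then σ is n-well-centered if and only if for each i = 0, 1, …, n, the vertex v_i lies strictly outside the equatorial ball of the facet opposite v_i; that is, if and only if for each i, dist(v_i, c(F_i)) > R(F_i), where F_i is the facet of σ opposite v_i. -/
open EuclideanGeometry RealInnerProductSpace

variable {E : Type*} [NormedAddCommGroup E] [InnerProductSpace ℝ E] [FiniteDimensional ℝ E]

/-- The facet of an `(n+1)`-simplex opposite vertex `i`. -/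
noncomputable def Affine.Simplex.facetOpp {n : ℕ} (σ : Affine.Simplex ℝ E (n + 1))
    (i : Fin (n + 2)) : Affine.Simplex ℝ E n :=
  σ.face (fs := {i}ᶜ)
    (by rw [Finset.card_compl, Finset.card_singleton, Fintype.card_fin]; rfl)

/-- A simplex is well-centered if its circumcenter is a positive affine
combination of its vertices, i.e. lies in the interior of the simplex. -/
def Affine.Simplex.WellCentered {n : ℕ} (σ : Affine.Simplex ℝ E n) : Prop :=
  ∃ w : Fin (n + 1) → ℝ, (∀ j, 0 < w j) ∧ (∑ j, w j = 1) ∧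
    σ.circumcenter = Finset.univ.affineCombination ℝ σ.points w

/-- The signed distance from the circumcenter of `σ` to the hyperplane spanned by the
facet opposite vertex `i`, positive when the circumcenter is on the same side as vertex `i`. -/
noncomputable def Affine.Simplex.signedDist {n : ℕ} (σ : Affine.Simplex ℝ E (n + 1))
    (i : Fin (n + 2)) : ℝ :=
  ⟪σ.circumcenter - ((σ.facetOpp i).circumcenter : E),
      σ.points i - (((σ.facetOpp i).orthogonalProjectionSpan (σ.points i) : E))⟫ /
    ‖σ.points i - (((σ.facetOpp i).orthogonalProjectionSpan (σ.points i) : E))‖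

/-!
Write the circumcenter `c` of `σ` as an affine combination `∑ wⱼ vⱼ`. Its signed distance to
the hyperplane of the facet `Fᵢ`, oriented towards `vᵢ`, is `wᵢ hᵢ` with `hᵢ > 0` the height, so
`σ` is well-centered iff `c` lies strictly on the side of `vᵢ` of every facet hyperplane. Since
`c` projects orthogonally onto the circumcenter `cᵢ` of `Fᵢ`, comparing
`‖vᵢ - c‖² = R² = rᵢ² + ‖c - cᵢ‖²` shows that the power `dist(vᵢ, cᵢ)² - rᵢ²` of `vᵢ` with
respect to the circumsphere of `Fᵢ` is `2 hᵢ` times that signed distance.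
-/

section

variable {V P : Type*} [NormedAddCommGroup V] [InnerProductSpace ℝ V] [MetricSpace P]
  [NormedAddTorsor V P]

theorem EuclideanGeometry.Sphere.power_eq_two_mul_inner {S : Sphere P} {a p x : P} (ha : a ∈ S)
    (hperp : ⟪a -ᵥ S.center, x -ᵥ S.center⟫ = 0) (hx : dist p x = dist a x) :
    S.power p = 2 * ⟪p -ᵥ S.center, x -ᵥ S.center⟫ := by
  have hexpand (y : P) : dist y x ^ 2 =
      dist y S.center ^ 2 - 2 * ⟪y -ᵥ S.center, x -ᵥ S.center⟫ + dist x S.center ^ 2 := by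
    rw [dist_eq_norm_vsub V, dist_eq_norm_vsub V, dist_eq_norm_vsub V,
      ← vsub_sub_vsub_cancel_right y x S.center, norm_sub_sq_real]
  have hp := hexpand p
  have ha' := hexpand a
  rw [hperp, mem_sphere.1 ha] at ha'
  rw [hx] at hp
  rw [Sphere.power]
  linarith

theorem AffineSubspace.signedInfDist_self_mul_signedInfDist (s : AffineSubspace ℝ P) [Nonempty s]
    [s.direction.HasOrthogonalProjection] {p q x : P} (hq : q ∈ s)
    (hx : x -ᵥ q ∈ s.directionᗮ) :
    s.signedInfDist p p * s.signedInfDist p x = ⟪p -ᵥ q, x -ᵥ q⟫ := by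
  rw [signedInfDist_apply_self, signedInfDist_eq_signedDist_of_mem hq, signedDist_apply_apply,
    ← real_inner_smul_left, NormedSpace.norm_smul_normalize,
    ← vsub_add_vsub_cancel p (orthogonalProjection s p : P) q, inner_add_left,
    Submodule.inner_right_of_mem_orthogonal
      (vsub_mem_direction (orthogonalProjection_mem p) hq) hx, add_zero]

namespace Affine.Simplex

section NeZero

variable {n : ℕ} [NeZero n] (s : Simplex ℝ P n)

theorem signedInfDist_affineCombination_eq_mul_height (i : Fin (n + 1)) {w : Fin (n + 1) → ℝ}
    (hw : ∑ j, w j = 1) :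
    s.signedInfDist i (Finset.univ.affineCombination ℝ s.points w) = w i * s.height i := by
  rw [signedInfDist_affineCombination _ _ hw, height, dist_eq_norm_vsub V]
  rfl

theorem signedInfDist_self_eq_height (i : Fin (n + 1)) :
    s.signedInfDist i (s.points i) = s.height i := by
  rw [signedInfDist_apply_self, height, dist_eq_norm_vsub V]
  rfl

theorem exists_pos_weights_iff_forall_signedInfDist_pos {p : P}
    (hp : p ∈ affineSpan ℝ (Set.range s.points)) :
    (∃ w : Fin (n + 1) → ℝ, (∀ j, 0 < w j) ∧ ∑ j, w j = 1 ∧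
      p = Finset.univ.affineCombination ℝ s.points w) ↔ ∀ i, 0 < s.signedInfDist i p := by
  constructor
  · rintro ⟨w, hpos, hw, rfl⟩ i
    rw [s.signedInfDist_affineCombination_eq_mul_height i hw]
    exact mul_pos (hpos i) (s.height_pos i)
  · intro h
    obtain ⟨w, hw, rfl⟩ := eq_affineCombination_of_mem_affineSpan_of_fintype hp
    refine ⟨w, fun i => ?_, hw, rfl⟩
    have hi := h i
    rwa [s.signedInfDist_affineCombination_eq_mul_height i hw,
      mul_pos_iff_of_pos_right (s.height_pos i)] at hi

end NeZero

theorem range_facetOpp_points {n : ℕ} (σ : Simplex ℝ V (n + 1)) (i : Fin (n + 2)) :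
    Set.range (σ.facetOpp i).points = σ.points '' {i}ᶜ := by
  simp [facetOpp, range_face_points]

theorem power_facetOpp_circumsphere {n : ℕ} (σ : Simplex ℝ V (n + 1)) (i : Fin (n + 2)) :
    (σ.facetOpp i).circumsphere.power (σ.points i) =
      2 * σ.height i * σ.signedInfDist i σ.circumcenter := by
  set F := σ.facetOpp i
  have hcF : F.circumcenter ∈ affineSpan ℝ (σ.points '' {i}ᶜ) :=
    σ.range_facetOpp_points i ▸ F.circumcenter_mem_affineSpan
  have hperp :
      σ.circumcenter -ᵥ F.circumcenter ∈ (affineSpan ℝ (σ.points '' {i}ᶜ)).directionᗮ := by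
    have h := vsub_orthogonalProjection_mem_direction_orthogonal
      (affineSpan ℝ (Set.range F.points)) σ.circumcenter
    rwa [← orthogonalProjectionSpan, show (F.orthogonalProjectionSpan σ.circumcenter : V) =
      F.circumcenter from σ.orthogonalProjection_circumcenter _, σ.range_facetOpp_points] at h
  have hF0 : F.points 0 ∈ affineSpan ℝ (σ.points '' {i}ᶜ) :=
    σ.range_facetOpp_points i ▸ mem_affineSpan ℝ (Set.mem_range_self 0)
  rw [← signedInfDist_self_eq_height, mul_assoc, signedInfDist,
    AffineSubspace.signedInfDist_self_mul_signedInfDist _ hcF hperp]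
  exact Sphere.power_eq_two_mul_inner (F.mem_circumsphere 0)
    (Submodule.inner_right_of_mem_orthogonal (AffineSubspace.vsub_mem_direction hF0 hcF) hperp)
    ((σ.dist_circumcenter_eq_circumradius i).trans (σ.dist_circumcenter_eq_circumradius _).symm)

theorem wellCentered_iff_forall_signedInfDist_circumcenter_pos {n : ℕ} [NeZero n]
    (σ : Simplex ℝ V n) : σ.WellCentered ↔ ∀ i, 0 < σ.signedInfDist i σ.circumcenter :=
  σ.exists_pos_weights_iff_forall_signedInfDist_pos σ.circumcenter_mem_affineSpan

end Affine.Simplex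

end

/-- An `(n+1)`-simplex is well-centered iff every vertex lies strictly
outside the equatorial ball of the opposite facet. -/
theorem wellCentered_iff_vertices_outside_equatorial_balls {n : ℕ}
    (σ : Affine.Simplex ℝ E (n + 1)) :
    σ.WellCentered ↔ ∀ i : Fin (n + 2),
      dist (σ.points i) (σ.facetOpp i).circumcenter > (σ.facetOpp i).circumradius := by
  rw [σ.wellCentered_iff_forall_signedInfDist_circumcenter_pos]
  refine forall_congr' fun i => ?_
  rw [gt_iff_lt, ← (σ.facetOpp i).circumsphere_center, ← (σ.facetOpp i).circumsphere_radius,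
    ← Sphere.power_pos_iff_radius_lt_dist_center (σ.facetOpp i).circumradius_nonneg,
    σ.power_facetOpp_circumsphere, mul_pos_iff_of_pos_left (by positivity)]
end

section
/- Let σ be an n-simplex (n ≥ 1) in a Euclidean space, let F_i be the facet opposite vertex v_i, and write c = c(σ), c_i = c(F_i), R = R(σ). If x is any point with dist(x, c) = R and ⟪x − c_i, c − c_i⟫ > 0 (i.e., x lies on the circumsphere of σ and strictly on the same side of the hyperplane affineSpan(F_i) as the circumcenter c), then dist(x, c_i) > R(F_i), i.e., x lies strictly outside the equatorial ball of F_i. -/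
open EuclideanGeometry RealInnerProductSpace

variable {E : Type*} [NormedAddCommGroup E] [InnerProductSpace ℝ E] [FiniteDimensional ℝ E]

/-! The circumcenter of a facet is the orthogonal projection of the circumcenter of `σ`, so
Pythagoras at a vertex of the facet gives `R² = R(Fᵢ)² + ‖c - cᵢ‖²`. Expanding
`‖x - c‖² = R²` around `cᵢ` then yields `‖x - cᵢ‖² = R(Fᵢ)² + 2 ⟪x - cᵢ, c - cᵢ⟫`. -/

theorem dist_sq_eq_dist_sq_sub_dist_sq_add_two_mul_inner {V : Type*} [NormedAddCommGroup V]
    [InnerProductSpace ℝ V] (x c p : V) :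
    dist x p ^ 2 = dist x c ^ 2 - dist c p ^ 2 + 2 * ⟪x - p, c - p⟫ := by
  have hxc : x - c = (x - p) - (c - p) := by abel
  rw [dist_eq_norm x c, hxc, norm_sub_sq_real, dist_eq_norm, dist_eq_norm]
  ring

namespace Affine.Simplex

theorem circumradius_sq_eq_circumradius_face_sq_add_dist_sq {V P : Type*}
    [NormedAddCommGroup V] [InnerProductSpace ℝ V] [MetricSpace P] [NormedAddTorsor V P]
    {n : ℕ} (s : Simplex ℝ P n) {fs : Finset (Fin (n + 1))} {m : ℕ} (h : fs.card = m + 1) :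
    s.circumradius ^ 2 =
      (s.face h).circumradius ^ 2 + dist s.circumcenter (s.face h).circumcenter ^ 2 := by
  have hpyth := (s.face h).dist_sq_eq_dist_orthogonalProjection_sq_add_dist_orthogonalProjection_sq
    s.circumcenter (mem_affineSpan ℝ (Set.mem_range_self 0))
  rw [s.orthogonalProjection_circumcenter h, (s.face h).dist_circumcenter_eq_circumradius,
    face_points, s.dist_circumcenter_eq_circumradius] at hpyth
  rw [sq, sq, sq, hpyth]

end Affine.Simplex

/-- A point of the circumsphere of `σ` strictly on the same side of the
hyperplane of the facet opposite vertex `i` as the circumcenter lies strictly outside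
the equatorial ball of that facet. -/
theorem dist_gt_circumradius_facet_of_mem_sphere_of_same_side {n : ℕ}
    (σ : Affine.Simplex ℝ E (n + 1)) (i : Fin (n + 2)) (x : E)
    (hx : dist x σ.circumcenter = σ.circumradius)
    (hside : ⟪x - ((σ.facetOpp i).circumcenter : E),
      σ.circumcenter - (σ.facetOpp i).circumcenter⟫ > 0) :
    dist x (σ.facetOpp i).circumcenter > (σ.facetOpp i).circumradius := by
  have hR : σ.circumradius ^ 2 = (σ.facetOpp i).circumradius ^ 2 +
      dist σ.circumcenter (σ.facetOpp i).circumcenter ^ 2 :=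
    σ.circumradius_sq_eq_circumradius_face_sq_add_dist_sq _
  have hdist := dist_sq_eq_dist_sq_sub_dist_sq_add_two_mul_inner x σ.circumcenter
    (σ.facetOpp i).circumcenter
  have hsq : (σ.facetOpp i).circumradius ^ 2 < dist x (σ.facetOpp i).circumcenter ^ 2 := by
    rw [hdist, hx]
    linarith
  exact lt_of_pow_lt_pow_left₀ 2 dist_nonneg hsq
end

section
/- Let σ and τ be two n-well-centered n-simplices in ℝⁿ (n ≥ 1) sharing a common facet F (i.e., n of the n+1 vertices of σ coincide with n of the n+1 vertices of τ, forming the (n−1)-simplex F), and suppose the remaining vertex v of σ and the remaining vertex u of τ lie strictly on opposite sides of the hyperplane affineSpan(F): there is a vector w orthogonal to the direction of affineSpan(F) and a point p ∈ affineSpan(F) with ⟪v − p, w⟫ > 0 > ⟪u − p, w⟫. Then u lies strictly outside the circumball of σ: dist(u, c(σ)) > R(σ). (This is the local Delaunay condition underlying the corollary that every n-well-centered simplicial mesh of a convex subset of ℝⁿ is a Delaunay triangulation of its vertices.) -/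
/-!
Let `H` be the hyperplane of the shared facet `F`. Both circumcenters project orthogonally onto
`H` at the circumcenter of `F`, so `c(τ) - c(σ)` is normal to `H`; well-centeredness puts `c(σ)`
on the side of `v` and `c(τ)` on the side of `u`, hence `c(τ) - c(σ)` points from `H` towards `u`.
The power of a point with respect to the circumsphere of `σ` minus its power with respect to that
of `τ` is an affine function vanishing at the vertices of `F`, so the power of `u` with respect to
the circumsphere of `σ` is `2⟪u - q, c(τ) - c(σ)⟫ > 0` for any vertex `q` of `F`.
-/

open EuclideanGeometry RealInnerProductSpace

variable {E : Type*} [NormedAddCommGroup E] [InnerProductSpace ℝ E] [FiniteDimensional ℝ E]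

section InnerProductSpace

variable {V : Type*} [NormedAddCommGroup V] [InnerProductSpace ℝ V]

lemma inner_pos_of_mem_span_singleton {x d w : V} (hd : d ∈ ℝ ∙ w) (hdw : ⟪d, w⟫ < 0)
    (hxw : ⟪x, w⟫ < 0) : 0 < ⟪x, d⟫ := by
  obtain ⟨t, rfl⟩ := Submodule.mem_span_singleton.1 hd
  rw [real_inner_smul_left] at hdw
  rw [real_inner_smul_right]
  exact mul_pos_of_neg_of_neg (neg_of_mul_neg_left hdw real_inner_self_nonneg) hxw

end InnerProductSpace

section EuclideanGeometry

variable {V P : Type*} [NormedAddCommGroup V] [InnerProductSpace ℝ V] [MetricSpace P]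
  [NormedAddTorsor V P]

lemma lt_dist_of_inner_vsub_vsub_pos {c₁ c₂ q u : P} {r₁ r₂ : ℝ} (hq₁ : dist q c₁ = r₁)
    (hq₂ : dist q c₂ = r₂) (hu₂ : dist u c₂ = r₂) (h : 0 < ⟪u -ᵥ q, c₂ -ᵥ c₁⟫) :
    r₁ < dist u c₁ := by
  have hpow : dist u c₁ ^ 2 - r₁ ^ 2 = 2 * ⟪u -ᵥ q, c₂ -ᵥ c₁⟫ := by
    have hu₁ : u -ᵥ c₁ = (u -ᵥ q) + (q -ᵥ c₁) := (vsub_add_vsub_cancel u q c₁).symm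
    have hu₂' : u -ᵥ c₂ = (u -ᵥ q) + ((q -ᵥ c₁) - (c₂ -ᵥ c₁)) := by
      rw [← add_sub_assoc, ← hu₁, vsub_sub_vsub_cancel_right]
    have hq₂' : q -ᵥ c₂ = (q -ᵥ c₁) - (c₂ -ᵥ c₁) := (vsub_sub_vsub_cancel_right q c₂ c₁).symm
    have hequal := congrArg (· ^ 2) (hu₂.trans hq₂.symm)
    simp only [dist_eq_norm_vsub V, hu₂', hq₂', hu₁, ← hq₁, norm_add_sq_real,
      inner_sub_right] at hequal ⊢
    linarith
  have hr₁ : 0 ≤ r₁ := hq₁ ▸ dist_nonneg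
  nlinarith [dist_nonneg (x := u) (y := c₁)]

namespace Affine.Simplex

lemma finrank_orthogonal_direction_affineSpan_eq_one [FiniteDimensional ℝ V] {n : ℕ}
    (F : Simplex ℝ P n) (hV : Module.finrank ℝ V = n + 1) :
    Module.finrank ℝ (affineSpan ℝ (Set.range F.points)).directionᗮ = 1 := by
  have h := (vectorSpan ℝ (Set.range F.points)).finrank_add_finrank_orthogonal
  rw [F.independent.finrank_vectorSpan (Fintype.card_fin _), hV] at h
  rw [direction_affineSpan]
  omega

lemma dist_circumcenter_eq_circumradius_of_mem_range_face {n m : ℕ} (s : Simplex ℝ P n)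
    {fs : Finset (Fin (n + 1))} (h : fs.card = m + 1) {x : P}
    (hx : x ∈ Set.range (s.face h).points) : dist x s.circumcenter = s.circumradius := by
  rw [range_face_points] at hx
  obtain ⟨k, -, rfl⟩ := hx
  exact s.dist_circumcenter_eq_circumradius k

lemma orthogonalProjectionSpan_circumcenter_of_range_face_eq {n m : ℕ} (s : Simplex ℝ P n)
    {fs : Finset (Fin (n + 1))} (h : fs.card = m + 1) {F : Simplex ℝ P m}
    (hF : Set.range (s.face h).points = Set.range F.points) :
    (F.orthogonalProjectionSpan s.circumcenter : P) = F.circumcenter := by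
  rw [← orthogonalProjectionSpan_congr hF rfl, orthogonalProjection_circumcenter,
    circumcenter_eq_of_range_eq hF]

lemma circumcenter_vsub_circumcenter_mem_orthogonal {n₁ n₂ m : ℕ} (s₁ : Simplex ℝ P n₁)
    (s₂ : Simplex ℝ P n₂) {fs₁ : Finset (Fin (n₁ + 1))} {fs₂ : Finset (Fin (n₂ + 1))}
    (h₁ : fs₁.card = m + 1) (h₂ : fs₂.card = m + 1) {F : Simplex ℝ P m}
    (hF₁ : Set.range (s₁.face h₁).points = Set.range F.points)
    (hF₂ : Set.range (s₂.face h₂).points = Set.range F.points) :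
    s₁.circumcenter -ᵥ s₂.circumcenter ∈ (affineSpan ℝ (Set.range F.points)).directionᗮ := by
  rw [← orthogonalProjection_eq_orthogonalProjection_iff_vsub_mem]
  exact Subtype.ext <| (s₁.orthogonalProjectionSpan_circumcenter_of_range_face_eq h₁ hF₁).trans
    (s₂.orthogonalProjectionSpan_circumcenter_of_range_face_eq h₂ hF₂).symm

end Affine.Simplex

end EuclideanGeometry

namespace Affine.Simplex

variable {V : Type*} [NormedAddCommGroup V] [InnerProductSpace ℝ V]

lemma points_mem_affineSpan_facetOpp {n : ℕ} (σ : Simplex ℝ V (n + 1)) {i k : Fin (n + 2)} :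
    σ.points k ∈ affineSpan ℝ (Set.range (σ.facetOpp i).points) ↔ k ≠ i := by
  rw [facetOpp, points_mem_affineSpan_face, Finset.mem_compl, Finset.mem_singleton]

lemma WellCentered.exists_pos_inner_circumcenter_eq {m : ℕ} {σ : Simplex ℝ V m}
    (hσ : σ.WellCentered) {p w : V} {i : Fin (m + 1)}
    (h0 : ∀ k ≠ i, ⟪σ.points k - p, w⟫ = 0) :
    ∃ c > 0, ⟪σ.circumcenter - p, w⟫ = c * ⟪σ.points i - p, w⟫ := by
  obtain ⟨c, hpos, hsum, hcc⟩ := hσ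
  refine ⟨c i, hpos i, ?_⟩
  rw [hcc, Finset.affineCombination_eq_weightedVSubOfPoint_vadd_of_sum_eq_one _ _ _ hsum p,
    vadd_eq_add, add_sub_cancel_right, Finset.weightedVSubOfPoint_apply, sum_inner,
    Finset.sum_eq_single i (fun k _ hk => by rw [real_inner_smul_left, vsub_eq_sub, h0 k hk,
      mul_zero]) (by simp), real_inner_smul_left, vsub_eq_sub]

end Affine.Simplex

/-- The local Delaunay property of well-centered simplices: if two
well-centered `(n+1)`-simplices in `ℝⁿ⁺¹` share a facet `F` and their opposite vertices
lie strictly on opposite sides of the hyperplane of `F`, then the vertex of `τ`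
opposite `F` lies strictly outside the circumball of `σ`. -/
theorem dist_gt_circumradius_of_wellCentered_shared_facet {n : ℕ}
    (σ τ : Affine.Simplex ℝ (EuclideanSpace ℝ (Fin (n + 1))) (n + 1))
    (F : Affine.Simplex ℝ (EuclideanSpace ℝ (Fin (n + 1))) n)
    (i j : Fin (n + 2))
    (hσF : Set.range (σ.facetOpp i).points = Set.range F.points)
    (hτF : Set.range (τ.facetOpp j).points = Set.range F.points)
    (hσ : σ.WellCentered) (hτ : τ.WellCentered)
    (w p : EuclideanSpace ℝ (Fin (n + 1)))
    (hw : w ∈ (affineSpan ℝ (Set.range F.points)).directionᗮ)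
    (hp : p ∈ affineSpan ℝ (Set.range F.points))
    (hv : ⟪σ.points i - p, w⟫ > 0) (hu : ⟪τ.points j - p, w⟫ < 0) :
    dist (τ.points j) σ.circumcenter > σ.circumradius := by
  have hS : ∀ x ∈ affineSpan ℝ (Set.range F.points), ⟪x - p, w⟫ = 0 := fun x hx =>
    Submodule.inner_right_of_mem_orthogonal (AffineSubspace.vsub_mem_direction hx hp) hw
  obtain ⟨a, ha, hσc⟩ := hσ.exists_pos_inner_circumcenter_eq (i := i) fun k hk =>
    hS _ (hσF ▸ σ.points_mem_affineSpan_facetOpp.2 hk)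
  obtain ⟨b, hb, hτc⟩ := hτ.exists_pos_inner_circumcenter_eq (i := j) fun k hk =>
    hS _ (hτF ▸ τ.points_mem_affineSpan_facetOpp.2 hk)
  have hw0 : w ≠ 0 := by rintro rfl; simp at hv
  have hline := eq_span_singleton_of_mem_of_finrank_eq_one
    (F.finrank_orthogonal_direction_affineSpan_eq_one finrank_euclideanSpace_fin) hw hw0
  have hd := hline ▸ τ.circumcenter_vsub_circumcenter_mem_orthogonal σ _ _ hτF hσF
  have hF₀ : F.points 0 ∈ Set.range F.points := Set.mem_range_self 0
  refine lt_dist_of_inner_vsub_vsub_pos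
    (σ.dist_circumcenter_eq_circumradius_of_mem_range_face _ (hσF ▸ hF₀))
    (τ.dist_circumcenter_eq_circumradius_of_mem_range_face _ (hτF ▸ hF₀))
    (τ.dist_circumcenter_eq_circumradius j) (inner_pos_of_mem_span_singleton hd ?_ ?_)
  · rw [vsub_eq_sub, ← sub_sub_sub_cancel_right _ _ p, inner_sub_left, hτc, hσc]
    linarith [mul_pos ha hv, mul_neg_of_pos_of_neg hb hu]
  · rw [vsub_eq_sub, ← sub_sub_sub_cancel_right _ _ p, inner_sub_left,
      hS _ (mem_affineSpan ℝ hF₀), sub_zero]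
    exact hu
end

section
/- Let σ be an n-well-centered n-simplex in ℝⁿ (n ≥ 1) with vertices v_0, …, v_n and facets F_i opposite v_i. Then the circumball of σ is contained in the union of σ with the equatorial balls of its facets: closedBall(c(σ), R(σ)) ⊆ convexHull({v_0, …, v_n}) ∪ ⋃_{i=0}^{n} closedBall(c(F_i), R(F_i)). -/
/-!
Write a point `x` of the circumball in barycentric coordinates `λⱼ` with respect to `σ`. If all of
them are nonnegative, `x ∈ σ`; otherwise `λᵢ x < 0` for some `i`. The circumcenter `cᵢ` of the
facet `Fᵢ` is the orthogonal projection of `c = c(σ)` onto its hyperplane, so the affine function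
`y ↦ ⟪y - cᵢ, c - cᵢ⟫` vanishes on that hyperplane and equals `λᵢ y · K` for a constant `K`.
At `y = c` it is `‖c - cᵢ‖² ≥ 0` while `λᵢ c > 0` by well-centeredness, so `K ≥ 0` and the
function is `≤ 0` at `x`. Expanding `‖x - c‖² ≤ R(σ)² = R(Fᵢ)² + ‖c - cᵢ‖²` around `cᵢ` then
gives `‖x - cᵢ‖ ≤ R(Fᵢ)`.
-/

open EuclideanGeometry RealInnerProductSpace

variable {E : Type*} [NormedAddCommGroup E] [InnerProductSpace ℝ E] [FiniteDimensional ℝ E]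

theorem AffineBasis.apply_eq_coord_mul_of_apply_eq_zero {ι k V P : Type*} [CommRing k]
    [AddCommGroup V] [Module k V] [AddTorsor V P] (b : AffineBasis ι k P) {f : P →ᵃ[k] k}
    {i : ι} (hf : ∀ j ≠ i, f (b j) = 0) (x : P) : f x = b.coord i x * f (b i) := by
  have hfeq : f = f (b i) • b.coord i := by
    refine AffineMap.ext_on b.tot ?_
    rintro - ⟨j, rfl⟩
    rcases eq_or_ne j i with rfl | hj
    · simp
    · simp [hf j hj, b.coord_apply_ne hj.symm]
  rw [hfeq]
  simp [mul_comm]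

theorem dist_le_dist_of_inner_vsub_nonpos {V P : Type*} [NormedAddCommGroup V]
    [InnerProductSpace ℝ V] [MetricSpace P] [NormedAddTorsor V P] {c c' p x : P}
    (hp : ⟪p -ᵥ c', c -ᵥ c'⟫ = 0) (hx : ⟪x -ᵥ c', c -ᵥ c'⟫ ≤ 0) (h : dist x c ≤ dist p c) :
    dist x c' ≤ dist p c' := by
  have hsq : ∀ y : P, dist y c ^ 2 = dist y c' ^ 2 - 2 * ⟪y -ᵥ c', c -ᵥ c'⟫ + dist c c' ^ 2 := by
    intro y
    rw [dist_eq_norm_vsub V, dist_eq_norm_vsub V, dist_eq_norm_vsub V,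
      ← vsub_sub_vsub_cancel_right y c c', norm_sub_sq_real]
  have hsq_le : dist x c' ^ 2 ≤ dist p c' ^ 2 := by
    linarith [hsq x, hsq p, pow_le_pow_left₀ dist_nonneg h 2]
  exact (pow_le_pow_iff_left₀ dist_nonneg dist_nonneg two_ne_zero).1 hsq_le

theorem Affine.Simplex.inner_vsub_circumcenter_face_eq_zero {V P : Type*}
    [NormedAddCommGroup V] [InnerProductSpace ℝ V] [MetricSpace P] [NormedAddTorsor V P] {n m : ℕ}
    (σ : Affine.Simplex ℝ P n) {fs : Finset (Fin (n + 1))} (h : fs.card = m + 1) {p : P}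
    (hp : p ∈ affineSpan ℝ (Set.range (σ.face h).points)) :
    ⟪p -ᵥ (σ.face h).circumcenter, σ.circumcenter -ᵥ (σ.face h).circumcenter⟫ = 0 := by
  have hperp : σ.circumcenter -ᵥ (σ.face h).circumcenter ∈
      (affineSpan ℝ (Set.range (σ.face h).points)).directionᗮ := by
    rw [← σ.orthogonalProjection_circumcenter h]
    exact vsub_orthogonalProjection_mem_direction_orthogonal _ _
  exact Submodule.inner_right_of_mem_orthogonal
    (AffineSubspace.vsub_mem_direction hp (σ.face h).circumcenter_mem_affineSpan) hperp

theorem Affine.Simplex.mem_closedBall_facetOpp_of_coord_neg {V : Type*} [NormedAddCommGroup V]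
    [InnerProductSpace ℝ V] {n : ℕ} (σ : Affine.Simplex ℝ V (n + 1))
    (b : AffineBasis (Fin (n + 2)) ℝ V) (hb : ⇑b = σ.points) {i : Fin (n + 2)}
    (hc : 0 < b.coord i σ.circumcenter) {x : V}
    (hx : x ∈ Metric.closedBall σ.circumcenter σ.circumradius) (hxi : b.coord i x < 0) :
    x ∈ Metric.closedBall (σ.facetOpp i).circumcenter (σ.facetOpp i).circumradius := by
  have hcard : ({i}ᶜ : Finset (Fin (n + 2))).card = n + 1 := by
    rw [Finset.card_compl, Finset.card_singleton, Fintype.card_fin]; rfl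
  set F := σ.facetOpp i
  have hF : F = σ.face hcard := rfl
  have horth : ∀ p ∈ affineSpan ℝ (Set.range F.points),
      ⟪p -ᵥ F.circumcenter, σ.circumcenter -ᵥ F.circumcenter⟫ = 0 :=
    fun _ => σ.inner_vsub_circumcenter_face_eq_zero hcard
  let f : V →ᵃ[ℝ] ℝ :=
    ((innerSL ℝ (σ.circumcenter -ᵥ F.circumcenter)).toLinearMap.toAffineMap).comp
      ((AffineEquiv.vaddConst ℝ F.circumcenter).symm : V →ᵃ[ℝ] V)
  have hf : ∀ y, f y = ⟪y -ᵥ F.circumcenter, σ.circumcenter -ᵥ F.circumcenter⟫ :=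
    fun _ => real_inner_comm _ _
  have hfb : ∀ j ≠ i, f (b j) = 0 := fun j hj => by
    rw [hf, hb]
    exact horth _ ((σ.points_mem_affineSpan_face hcard).2 (by simpa using hj))
  have hfi : 0 ≤ f (b i) := by
    have hfc := b.apply_eq_coord_mul_of_apply_eq_zero hfb σ.circumcenter
    rw [hf, real_inner_self_eq_norm_sq] at hfc
    exact nonneg_of_mul_nonneg_right (hfc ▸ sq_nonneg _) hc
  have hfx : ⟪x -ᵥ F.circumcenter, σ.circumcenter -ᵥ F.circumcenter⟫ ≤ 0 := by
    rw [← hf, b.apply_eq_coord_mul_of_apply_eq_zero hfb x]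
    exact mul_nonpos_of_nonpos_of_nonneg hxi.le hfi
  rw [Metric.mem_closedBall, ← F.dist_circumcenter_eq_circumradius 0]
  refine dist_le_dist_of_inner_vsub_nonpos
    (horth _ (mem_affineSpan ℝ (Set.mem_range_self 0))) hfx ?_
  rwa [← Metric.mem_closedBall, hF, Affine.Simplex.face_points,
    σ.dist_circumcenter_eq_circumradius]

/-- The circumball of a well-centered `(n+1)`-simplex in `ℝⁿ⁺¹` is
contained in the union of the simplex with the equatorial balls of its facets. -/
theorem circumball_subset_simplex_union_equatorial_balls {n : ℕ}
    (σ : Affine.Simplex ℝ (EuclideanSpace ℝ (Fin (n + 1))) (n + 1))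
    (hσ : σ.WellCentered) :
    Metric.closedBall σ.circumcenter σ.circumradius ⊆
      convexHull ℝ (Set.range σ.points) ∪
        ⋃ i : Fin (n + 2),
          Metric.closedBall (σ.facetOpp i).circumcenter (σ.facetOpp i).circumradius := by
  obtain ⟨w, hw0, hw1, hwc⟩ := hσ
  have hspan : affineSpan ℝ (Set.range σ.points) = ⊤ := by
    rw [σ.independent.affineSpan_eq_top_iff_card_eq_finrank_add_one]
    simp
  let b : AffineBasis (Fin (n + 2)) ℝ _ := ⟨σ.points, σ.independent, hspan⟩
  have hc : ∀ i, b.coord i σ.circumcenter = w i := fun i => by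
    rw [hwc]
    exact b.coord_apply_combination_of_mem (Finset.mem_univ i) hw1
  intro x hx
  by_cases hcoord : ∀ i, 0 ≤ b.coord i x
  · left
    exact b.convexHull_eq_nonneg_coord.symm ▸ hcoord
  · right
    obtain ⟨i, hi⟩ := not_forall.1 hcoord
    exact Set.mem_iUnion.2 ⟨i, σ.mem_closedBall_facetOpp_of_coord_neg b rfl
      ((hc i).symm ▸ hw0 i) hx (not_le.1 hi)⟩
end

section
/- Let σ be an n-well-centered n-simplex (n ≥ 1) in a Euclidean space. Then there exists an index i with dist(c(σ), affineSpan(F_i)) ≤ R(σ)/n, where F_i is the facet opposite vertex v_i; equivalently, at some vertex the ratio h/R of the distance from the circumcenter to the opposite facet's hyperplane over the circumradius is at most 1/n. -/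
open EuclideanGeometry RealInnerProductSpace

variable {E : Type*} [NormedAddCommGroup E] [InnerProductSpace ℝ E] [FiniteDimensional ℝ E]

/-! If `c = ∑ w_j v_j` with all `w_j > 0`, pick `i` with the smallest weight, so `w_i ≤ 1/(n+2)`.
Then `c` lies on the segment from a point `q` of the facet hyperplane opposite `v_i` to `v_i`,
with `c - q = w_i (v_i - q)`. The triangle inequality through `c` gives
`(1 - w_i) |c - q| ≤ w_i |c - v_i| = w_i R`, and `w_i / (1 - w_i) ≤ 1/(n+1)`. -/

section

variable {k V P ι : Type*}

theorem Finset.exists_mem_affineSpan_erase_lineMap_eq_affineCombination [DivisionRing k]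
    [AddCommGroup V] [Module k V] [AddTorsor V P] [DecidableEq ι] {s : Finset ι} {w : ι → k}
    (h : ∑ j ∈ s, w j = 1) {i : ι} (hi : i ∈ s) (hwi : w i ≠ 1) (p : ι → P) :
    ∃ q ∈ affineSpan k (p '' ↑(s.erase i)),
      AffineMap.lineMap q (p i) (w i) = s.affineCombination k p w := by
  have hwi' : 1 - w i ≠ 0 := sub_ne_zero.2 hwi.symm
  set w' : ι → k := fun j ↦ (1 - w i)⁻¹ * w j
  have hw' : ∑ j ∈ s.erase i, w' j = 1 := by
    rw [← Finset.mul_sum, Finset.sum_erase_eq_sub hi, h, inv_mul_cancel₀ hwi']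
  set q := (s.erase i).affineCombination k p w'
  refine ⟨q, affineCombination_mem_affineSpan_image hw' (fun j hj hj' ↦ (hj' hj).elim) p, ?_⟩
  have hq : ∑ j ∈ s.erase i, w j • (p j -ᵥ q) = 0 := by
    have := ((s.erase i).sum_smul_vsub_const_eq_affineCombination_vsub w' p q hw').trans
      (vsub_self q)
    simp only [w', mul_smul, ← Finset.smul_sum] at this
    exact (smul_eq_zero_iff_right (inv_ne_zero hwi')).1 this
  rw [s.affineCombination_eq_weightedVSubOfPoint_vadd_of_sum_eq_one w p h q,
    Finset.weightedVSubOfPoint_apply, ← Finset.add_sum_erase s _ hi, hq, add_zero,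
    AffineMap.lineMap_apply]

theorem one_sub_mul_dist_lineMap_left_le [NormedAddCommGroup V] [NormedSpace ℝ V]
    [MetricSpace P] [NormedAddTorsor V P] (q v : P) {t : ℝ} (ht : 0 ≤ t) :
    (1 - t) * dist (AffineMap.lineMap q v t) q ≤ t * dist (AffineMap.lineMap q v t) v := by
  have hxq : dist (AffineMap.lineMap q v t) q = t * dist q v := by
    rw [dist_lineMap_left, Real.norm_of_nonneg ht]
  have hqv := dist_triangle q (AffineMap.lineMap q v t) v
  rw [dist_comm q (AffineMap.lineMap q v t), hxq] at hqv
  rw [hxq]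
  nlinarith [mul_le_mul_of_nonneg_left hqv ht]

theorem Finset.infDist_affineSpan_erase_le [NormedAddCommGroup V] [NormedSpace ℝ V]
    [MetricSpace P] [NormedAddTorsor V P] [DecidableEq ι] {s : Finset ι} {w : ι → ℝ}
    (h : ∑ j ∈ s, w j = 1) {i : ι} (hi : i ∈ s) (hwi₀ : 0 ≤ w i) (hwi₁ : w i < 1) (p : ι → P) :
    Metric.infDist (s.affineCombination ℝ p w) (affineSpan ℝ (p '' ↑(s.erase i))) ≤
      w i / (1 - w i) * dist (s.affineCombination ℝ p w) (p i) := by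
  obtain ⟨q, hq, hcq⟩ := s.exists_mem_affineSpan_erase_lineMap_eq_affineCombination h hi
    hwi₁.ne p
  rw [div_mul_eq_mul_div, le_div_iff₀ (sub_pos.2 hwi₁), mul_comm, ← hcq]
  calc (1 - w i) * Metric.infDist _ _
      ≤ (1 - w i) * dist (AffineMap.lineMap q (p i) (w i)) q :=
        mul_le_mul_of_nonneg_left (Metric.infDist_le_dist_of_mem hq) (sub_nonneg.2 hwi₁.le)
    _ ≤ _ := one_sub_mul_dist_lineMap_left_le q (p i) hwi₀

end

/-- In a well-centered `(n+1)`-simplex there is a vertex whose opposite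
facet hyperplane is at distance at most `R/(n+1)` from the circumcenter. -/
theorem exists_facet_dist_le_circumradius_div_of_wellCentered {n : ℕ}
    (σ : Affine.Simplex ℝ E (n + 1)) (hσ : σ.WellCentered) :
    ∃ i : Fin (n + 2),
      Metric.infDist σ.circumcenter
          (affineSpan ℝ (Set.range (σ.facetOpp i).points) : Set E) ≤
        σ.circumradius / (n + 1) := by
  obtain ⟨w, hw₀, hw₁, hc⟩ := hσ
  obtain ⟨i, -, hi⟩ : ∃ i ∈ Finset.univ, (n + 2 : ℝ) * w i ≤ 1 :=
    Finset.exists_le_of_sum_le Finset.univ_nonempty (by simp [← Finset.mul_sum, hw₁]; linarith)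
  have hwi₀ := hw₀ i
  have hwi₁ : w i < 1 := by nlinarith
  refine ⟨i, ?_⟩
  rw [Affine.Simplex.facetOpp, Affine.Simplex.range_face_points, Finset.compl_singleton, hc]
  calc _ ≤ w i / (1 - w i) * dist (Finset.univ.affineCombination ℝ σ.points w) (σ.points i) :=
        Finset.univ.infDist_affineSpan_erase_le hw₁ (Finset.mem_univ i) hwi₀.le hwi₁
          σ.points
    _ = w i / (1 - w i) * σ.circumradius := by rw [← hc, σ.dist_circumcenter_eq_circumradius']
    _ ≤ σ.circumradius / (n + 1) := by
        rw [div_mul_eq_mul_div, div_le_div_iff₀ (sub_pos.2 hwi₁) (by positivity)]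
        nlinarith [σ.circumradius_nonneg]
end

section
/- Let T be a nonempty type indexing triangulations, and let A : T → Finset ℝ assign to each t a nonempty finite set of angles with A t ⊆ [0, π]. Suppose every triangulation has maximum angle at least π/2, i.e., for every t ∈ T there exists θ ∈ A t with θ ≥ π/2. Define E_max(t) = max_{θ ∈ A t} θ and E_cos(t) = max_{θ ∈ A t} |2·cos(θ) − 1|. Then t₀ minimizes E_max over T if and only if t₀ minimizes E_cos over T. -/
/-!
On `[π/2, π]` the map `θ ↦ |2 cos θ - 1| = 1 - 2 cos θ` is strictly increasing and at
least `1`, while on `[0, π/2]` it is at most `1`. Hence when the maximum angle `M` of a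
triangulation is at least `π/2`, its cosine energy is `|2 cos M - 1|`, and comparing energies
of two triangulations is the same as comparing their maximum angles.
-/

open Real Set

lemma abs_two_mul_cos_sub_one_eq {θ : ℝ} (h₁ : π / 2 ≤ θ) (h₂ : θ ≤ π) :
    |2 * cos θ - 1| = 1 - 2 * cos θ := by
  have : cos θ ≤ 0 := cos_nonpos_of_pi_div_two_le_of_le h₁ (by linarith [pi_pos])
  rw [abs_of_nonpos (by linarith), neg_sub]

lemma strictMonoOn_abs_two_mul_cos_sub_one :
    StrictMonoOn (fun θ => |2 * cos θ - 1|) (Icc (π / 2) π) := by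
  intro x ⟨hx₁, hx₂⟩ y ⟨hy₁, hy₂⟩ hxy
  have hx₀ : 0 ≤ x := by linarith [pi_pos]
  have hy₀ : 0 ≤ y := by linarith [pi_pos]
  have : cos y < cos x := strictAntiOn_cos ⟨hx₀, hx₂⟩ ⟨hy₀, hy₂⟩ hxy
  simp only [abs_two_mul_cos_sub_one_eq hx₁ hx₂, abs_two_mul_cos_sub_one_eq hy₁ hy₂]
  linarith

lemma abs_two_mul_cos_sub_one_le_of_le {θ M : ℝ} (hθ : 0 ≤ θ) (hθM : θ ≤ M)
    (hM : M ∈ Icc (π / 2) π) : |2 * cos θ - 1| ≤ |2 * cos M - 1| := by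
  rcases le_or_gt (π / 2) θ with hθ' | hθ'
  · exact strictMonoOn_abs_two_mul_cos_sub_one.monotoneOn ⟨hθ', hθM.trans hM.2⟩ hM hθM
  · have hcos₀ : 0 ≤ cos θ := cos_nonneg_of_mem_Icc ⟨by linarith [pi_pos], hθ'.le⟩
    have hcosM : cos M ≤ 0 := cos_nonpos_of_pi_div_two_le_of_le hM.1 (by linarith [hM.2, pi_pos])
    rw [abs_two_mul_cos_sub_one_eq hM.1 hM.2]
    exact abs_le.2 ⟨by linarith, by linarith [cos_le_one θ]⟩

lemma Finset.sup'_abs_two_mul_cos_sub_one_eq {s : Finset ℝ} (hs : s.Nonempty)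
    (hnonneg : ∀ θ ∈ s, 0 ≤ θ) (hM : s.sup' hs id ∈ Set.Icc (π / 2) π) :
    s.sup' hs (fun θ => |2 * cos θ - 1|) = |2 * cos (s.sup' hs id) - 1| :=
  le_antisymm
    (s.sup'_le hs _ fun θ hθ =>
      abs_two_mul_cos_sub_one_le_of_le (hnonneg θ hθ) (s.le_sup' id hθ) hM)
    (s.le_sup' (fun θ => |2 * cos θ - 1|) (s.max'_mem hs))

theorem argmin_maxAngle_iff_argmin_Ecos_general {T : Type*}
    (A : T → Finset ℝ) (hA : ∀ t, (A t).Nonempty)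
    (hrange : ∀ t, ∀ θ ∈ A t, θ ∈ Set.Icc 0 Real.pi)
    (hbig : ∀ t, ∃ θ ∈ A t, Real.pi / 2 ≤ θ) (t₀ : T) :
    (∀ t, (A t₀).sup' (hA t₀) id ≤ (A t).sup' (hA t) id) ↔
      (∀ t, (A t₀).sup' (hA t₀) (fun θ => |2 * Real.cos θ - 1|) ≤
        (A t).sup' (hA t) (fun θ => |2 * Real.cos θ - 1|)) := by
  have hM : ∀ t, (A t).sup' (hA t) id ∈ Icc (π / 2) π := fun t => by
    obtain ⟨θ, hθ, hθbig⟩ := hbig t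
    exact ⟨hθbig.trans ((A t).le_sup' id hθ), (hrange t _ ((A t).max'_mem (hA t))).2⟩
  have hEcos t :=
    (A t).sup'_abs_two_mul_cos_sub_one_eq (hA t) (fun θ hθ => (hrange t θ hθ).1) (hM t)
  simp only [hEcos]
  exact forall_congr' fun t =>
    (strictMonoOn_abs_two_mul_cos_sub_one.le_iff_le (hM t₀) (hM t)).symm

/-- If every triangulation has maximum angle at least `π/2`, then a
triangulation minimizes the maximum angle iff it minimizes the energy
`E_cos(t) = max_{θ ∈ A t} |2 cos θ − 1|`. -/
theorem argmin_maxAngle_iff_argmin_Ecos {T : Type*} [Nonempty T]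
    (A : T → Finset ℝ) (hA : ∀ t, (A t).Nonempty)
    (hrange : ∀ t, ∀ θ ∈ A t, θ ∈ Set.Icc 0 Real.pi)
    (hbig : ∀ t, ∃ θ ∈ A t, Real.pi / 2 ≤ θ) (t₀ : T) :
    (∀ t, (A t₀).sup' (hA t₀) id ≤ (A t).sup' (hA t) id) ↔
      (∀ t, (A t₀).sup' (hA t₀) (fun θ => |2 * Real.cos θ - 1|) ≤
        (A t).sup' (hA t) (fun θ => |2 * Real.cos θ - 1|)) :=
  argmin_maxAngle_iff_argmin_Ecos_general A hA hrange hbig t₀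
end

section
/- Let a, b, d be three affinely independent points in a Euclidean plane, all at the same distance R > 0 from a point c (so they lie on a common circle centered at c), and suppose there is a nonzero vector u with ⟪a − c, u⟫ ≥ 0, ⟪b − c, u⟫ ≥ 0, and ⟪d − c, u⟫ ≥ 0 (i.e., the triangle abd is contained in a closed half-plane whose boundary line passes through the center c). Then the triangle abd has an angle measuring at least π/2: at least one of ∠ b a d, ∠ a b d, ∠ a d b is ≥ π/2. -/
open EuclideanGeometry RealInnerProductSpace

/-!
Write the circumcenter `c` in barycentric coordinates `c = ∑ wᵢ pᵢ` with respect to the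
triangle. Then `∑ wᵢ ⟪pᵢ - c, u⟫ = 0`, and since the triangle spans the plane, not all
`⟪pᵢ - c, u⟫` vanish; as they are all nonnegative, some weight `wᵢ` is `≤ 0`. Finally, the
barycentric formula for the circumcenter, `2 wₐ G = ⟪b - a, d - a⟫ ‖d - b‖²` with `G ≥ 0` the
Gram determinant of `b - a, d - a`, shows that `wₐ ≤ 0` forces the angle at `a` to be at least
`π / 2`.
-/

variable {V : Type*} [NormedAddCommGroup V] [InnerProductSpace ℝ V]

theorem InnerProductGeometry.pi_div_two_le_angle_of_inner_nonpos {x y : V} (h : ⟪x, y⟫ ≤ 0) :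
    Real.pi / 2 ≤ InnerProductGeometry.angle x y := by
  rw [InnerProductGeometry.angle, ← Real.arccos_zero]
  exact Real.arccos_le_arccos (div_nonpos_of_nonpos_of_nonneg h (by positivity))

theorem two_mul_inner_sub_eq_norm_sub_sq_of_dist_eq {a b c : V} {r : ℝ}
    (ha : dist a c = r) (hb : dist b c = r) :
    2 * ⟪c - a, b - a⟫ = ‖b - a‖ ^ 2 := by
  have h : ‖b - c‖ ^ 2 = ‖a - c‖ ^ 2 := by rw [← dist_eq_norm, ← dist_eq_norm, ha, hb]
  rw [show b - c = (b - a) - (c - a) by abel, show a - c = -(c - a) by abel, norm_neg,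
    norm_sub_sq_real, real_inner_comm] at h
  linarith

theorem two_mul_weight_mul_gram_eq {a b d c : V} {l m n r : ℝ} (hsum : l + m + n = 1)
    (hc : l • a + m • b + n • d = c) (ha : dist a c = r) (hb : dist b c = r)
    (hd : dist d c = r) :
    2 * l * (‖b - a‖ ^ 2 * ‖d - a‖ ^ 2 - ⟪b - a, d - a⟫ ^ 2) =
      ⟪b - a, d - a⟫ * ‖d - b‖ ^ 2 := by
  have hca : c - a = m • (b - a) + n • (d - a) := by
    rw [← hc, show l = 1 - m - n by linarith]; module
  have eb := two_mul_inner_sub_eq_norm_sub_sq_of_dist_eq ha hb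
  have ed := two_mul_inner_sub_eq_norm_sub_sq_of_dist_eq ha hd
  rw [hca, inner_add_left, real_inner_smul_left, real_inner_smul_left,
    real_inner_self_eq_norm_sq, real_inner_comm] at eb
  rw [hca, inner_add_left, real_inner_smul_left, real_inner_smul_left,
    real_inner_self_eq_norm_sq] at ed
  have hdb : ‖d - b‖ ^ 2 = ‖d - a‖ ^ 2 - 2 * ⟪b - a, d - a⟫ + ‖b - a‖ ^ 2 := by
    rw [show d - b = (d - a) - (b - a) by abel, norm_sub_sq_real, real_inner_comm]
  rw [hdb]
  linear_combination (⟪b - a, d - a⟫ - ‖d - a‖ ^ 2) * eb +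
    (⟪b - a, d - a⟫ - ‖b - a‖ ^ 2) * ed +
    2 * (‖b - a‖ ^ 2 * ‖d - a‖ ^ 2 - ⟪b - a, d - a⟫ ^ 2) * hsum

theorem pi_div_two_le_angle_of_circumcenter_weight_nonpos {a b d c : V} {l m n r : ℝ}
    (hsum : l + m + n = 1) (hc : l • a + m • b + n • d = c) (ha : dist a c = r)
    (hb : dist b c = r) (hd : dist d c = r) (hbd : b ≠ d) (hl : l ≤ 0) :
    Real.pi / 2 ≤ ∠ b a d := by
  refine InnerProductGeometry.pi_div_two_le_angle_of_inner_nonpos ?_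
  rw [vsub_eq_sub, vsub_eq_sub]
  by_contra! hpos
  have hgram : 0 ≤ ‖b - a‖ ^ 2 * ‖d - a‖ ^ 2 - ⟪b - a, d - a⟫ ^ 2 := by
    have := real_inner_mul_inner_self_le (b - a) (d - a)
    rw [real_inner_self_eq_norm_sq, real_inner_self_eq_norm_sq] at this
    linarith
  have hdb : 0 < ‖d - b‖ ^ 2 := by
    have := sub_ne_zero.2 hbd.symm
    positivity
  have := two_mul_weight_mul_gram_eq hsum hc ha hb hd
  linarith [mul_nonpos_of_nonpos_of_nonneg hl hgram, mul_pos hpos hdb]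

theorem eq_zero_of_inner_sub_eq_zero_of_affineSpan_eq_top {ι : Type*} {p : ι → V} {c u : V}
    (hspan : affineSpan ℝ (Set.range p) = ⊤) (hpu : ∀ i, ⟪p i - c, u⟫ = 0) : u = 0 := by
  let S : AffineSubspace ℝ V := AffineSubspace.mk' c (ℝ ∙ u)ᗮ
  have hpS : Set.range p ⊆ S := by
    rintro _ ⟨i, rfl⟩
    rw [SetLike.mem_coe, AffineSubspace.mem_mk', vsub_eq_sub,
      Submodule.mem_orthogonal_singleton_iff_inner_right, real_inner_comm]
    exact hpu i
  have hS : S = ⊤ := top_le_iff.1 (hspan ▸ affineSpan_le.2 hpS)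
  have hcu : c + u ∈ S := hS ▸ AffineSubspace.mem_top ℝ V _
  rw [AffineSubspace.mem_mk', vsub_eq_sub, add_sub_cancel_left,
    Submodule.mem_orthogonal_singleton_iff_inner_right] at hcu
  exact inner_self_eq_zero.1 hcu

theorem exists_weight_nonpos_of_inner_sub_nonneg {ι : Type*} [Fintype ι] {p : ι → V}
    {w : ι → ℝ} {c u : V} (hspan : affineSpan ℝ (Set.range p) = ⊤) (hw : ∑ i, w i = 1)
    (hc : c = ∑ i, w i • p i) (hu : u ≠ 0) (hpu : ∀ i, 0 ≤ ⟪p i - c, u⟫) :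
    ∃ i, w i ≤ 0 := by
  by_contra! hpos
  have hsum : ∑ i, w i * ⟪p i - c, u⟫ = 0 := by
    simp_rw [← real_inner_smul_left, ← sum_inner, smul_sub, Finset.sum_sub_distrib,
      ← Finset.sum_smul, hw, one_smul, ← hc, sub_self, inner_zero_left]
  have hzero := (Finset.sum_eq_zero_iff_of_nonneg fun i _ ↦
    mul_nonneg (hpos i).le (hpu i)).1 hsum
  exact hu (eq_zero_of_inner_sub_eq_zero_of_affineSpan_eq_top hspan fun i ↦
    (mul_eq_zero.1 (hzero i (Finset.mem_univ i))).resolve_left (hpos i).ne')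

theorem exists_angle_ge_pi_div_two_of_halfplane_general {a b d c : EuclideanSpace ℝ (Fin 2)}
    {R : ℝ}
    (hind : AffineIndependent ℝ ![a, b, d])
    (hda : dist a c = R) (hdb : dist b c = R) (hdd : dist d c = R)
    {u : EuclideanSpace ℝ (Fin 2)} (hu : u ≠ 0)
    (hua : ⟪a - c, u⟫ ≥ 0) (hub : ⟪b - c, u⟫ ≥ 0) (hud : ⟪d - c, u⟫ ≥ 0) :
    Real.pi / 2 ≤ ∠ b a d ∨ Real.pi / 2 ≤ ∠ a b d ∨ Real.pi / 2 ≤ ∠ a d b := by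
  have hspan : affineSpan ℝ (Set.range ![a, b, d]) = ⊤ :=
    hind.affineSpan_eq_top_iff_card_eq_finrank_add_one.2 (by simp)
  obtain ⟨w, hw, hc⟩ :=
    eq_affineCombination_of_mem_affineSpan_of_fintype (hspan ▸ AffineSubspace.mem_top ℝ _ c)
  rw [Finset.affineCombination_eq_linear_combination _ _ _ hw] at hc
  obtain ⟨i, hi⟩ := exists_weight_nonpos_of_inner_sub_nonneg hspan hw hc hu
    (by intro i; fin_cases i <;> assumption)
  simp only [Fin.sum_univ_three, Matrix.cons_val] at hw hc
  have hne {i j : Fin 3} (hij : i ≠ j) : ![a, b, d] i ≠ ![a, b, d] j := hind.injective.ne hij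
  fin_cases i
  · exact .inl <| pi_div_two_le_angle_of_circumcenter_weight_nonpos hw hc.symm hda hdb hdd
      (hne (by decide : (1 : Fin 3) ≠ 2)) hi
  · exact .inr <| .inl <| pi_div_two_le_angle_of_circumcenter_weight_nonpos
      (l := w 1) (m := w 0) (n := w 2) (by linarith) (by rw [hc]; abel) hdb hda hdd
      (hne (by decide : (0 : Fin 3) ≠ 2)) hi
  · exact .inr <| .inr <| pi_div_two_le_angle_of_circumcenter_weight_nonpos
      (l := w 2) (m := w 0) (n := w 1) (by linarith) (by rw [hc]; abel) hdd hda hdb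
      (hne (by decide : (0 : Fin 3) ≠ 1)) hi

/-- Three affinely independent points on a circle of radius `R > 0`
centered at `c`, all lying in a closed half-plane whose boundary passes through `c`,
form a triangle with an angle of at least `π/2`. -/
theorem exists_angle_ge_pi_div_two_of_halfplane {a b d c : EuclideanSpace ℝ (Fin 2)}
    {R : ℝ} (hR : 0 < R)
    (hind : AffineIndependent ℝ ![a, b, d])
    (hda : dist a c = R) (hdb : dist b c = R) (hdd : dist d c = R)
    {u : EuclideanSpace ℝ (Fin 2)} (hu : u ≠ 0)
    (hua : ⟪a - c, u⟫ ≥ 0) (hub : ⟪b - c, u⟫ ≥ 0) (hud : ⟪d - c, u⟫ ≥ 0) :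
    Real.pi / 2 ≤ ∠ b a d ∨ Real.pi / 2 ≤ ∠ a b d ∨ Real.pi / 2 ≤ ∠ a d b :=
  exists_angle_ge_pi_div_two_of_halfplane_general hind hda hdb hdd hu hua hub hud
end
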